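/- arXiv:1011.0236 — 3 statements merged into one kernel-verified Lean document; each statement's English description precedes it below -/
import Mathlib

section
/- The cost c(x₁,…,x_l) = Σᵢ σᵢ |xᵢ - x̄|² with l ≥ 2 and all σᵢ > 0 is (1,l)-twisted: for any fixed x₂,…,x_{l−1}, the map x_l ↦ ∇_{x₁} c(x₁,…,x_l) from ℝⁿ to ℝⁿ is injective. -/
/-!
Differentiating `∑ σᵢ ‖xᵢ - x̄‖²` in `x₁`, the contribution of the moving barycenter is a multiple
of `⟪∑ σᵢ (xᵢ - x̄), ·⟫`, which vanishes; hence `∇_{x₁} c = 2 σ₁ (x₁ - x̄)`. For fixed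
`x₁, …, x_{l-1}` the barycenter is affine in `x_l` with slope `σ_l / ∑ σ_k ≠ 0`, so the gradient is
an injective affine function of `x_l`.
-/

open Finset Function

theorem Finset.sum_smul_sub_centerMass {R ι E : Type*} [Field R] [AddCommGroup E] [Module R E]
    (t : Finset ι) {w : ι → R} (hw : ∑ i ∈ t, w i ≠ 0) (z : ι → E) :
    ∑ i ∈ t, w i • (z i - t.centerMass w z) = 0 := by
  simp only [smul_sub, sum_sub_distrib, ← sum_smul, centerMass, smul_inv_smul₀ hw, sub_self]

theorem Finset.centerMass_update_injective {R ι E : Type*} [Field R] [AddCommGroup E]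
    [Module R E] [Fintype ι] [DecidableEq ι] {w : ι → R} (hw : ∑ i, w i ≠ 0) {j : ι}
    (hwj : w j ≠ 0) (z : ι → E) : Injective fun y => univ.centerMass w (update z j y) := by
  have hsum : ∀ y, ∑ k, w k • update z j y k = w j • y + ∑ k ∈ univ.erase j, w k • z k := by
    intro y
    rw [← add_sum_erase _ _ (mem_univ j), update_self]
    congr 1
    exact sum_congr rfl fun k hk => by rw [update_of_ne (ne_of_mem_erase hk)]
  intro a b hab
  simp only [centerMass, hsum] at hab
  exact smul_right_injective E hwj (add_right_cancel (smul_right_injective E (inv_ne_zero hw) hab))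

section BarycentricCost

variable {ι E : Type*} [Fintype ι] [NormedAddCommGroup E] [InnerProductSpace ℝ E]

noncomputable def barycentricCost (σ : ι → ℝ) (x : ι → E) : ℝ :=
  ∑ i, σ i * ‖x i - univ.centerMass σ x‖ ^ 2

theorem hasFDerivAt_centerMass (σ : ι → ℝ) (x : ι → E) :
    HasFDerivAt (fun y : ι → E => univ.centerMass σ y)
      (univ.centerMass σ (ContinuousLinearMap.proj (R := ℝ) (φ := fun _ : ι => E))) x := by
  have hlin : (fun y : ι → E => univ.centerMass σ y) =
      univ.centerMass σ (ContinuousLinearMap.proj (R := ℝ) (φ := fun _ : ι => E)) := by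
    ext y
    simp [centerMass]
  rw [hlin]
  exact ContinuousLinearMap.hasFDerivAt _

theorem hasFDerivAt_barycentricCost {σ : ι → ℝ} (hσ : ∑ i, σ i ≠ 0) (x : ι → E) :
    HasFDerivAt (barycentricCost σ)
      (∑ i, (2 * σ i) •
        (innerSL ℝ (x i - univ.centerMass σ x)).comp (ContinuousLinearMap.proj i)) x := by
  have h := HasFDerivAt.fun_sum (u := univ) fun i _ =>
    (((hasFDerivAt_apply i x).sub (hasFDerivAt_centerMass σ x)).norm_sq).const_mul (σ i)
  refine h.congr_fderiv ?_
  ext v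
  have hm : univ.centerMass σ (ContinuousLinearMap.proj (R := ℝ) (φ := fun _ : ι => E)) v =
      univ.centerMass σ v := by
    simp [centerMass]
  have hbal : ∑ i, σ i * inner ℝ (x i - univ.centerMass σ x) (univ.centerMass σ v) = 0 := by
    simp_rw [← real_inner_smul_left, ← sum_inner, sum_smul_sub_centerMass _ hσ, inner_zero_left]
  simp only [_root_.sum_apply, smul_apply, ContinuousLinearMap.comp_apply, sub_apply, hm, innerSL_apply_apply, ContinuousLinearMap.proj_apply,
    inner_sub_right, smul_eq_mul, Pi.sub_apply, nsmul_eq_mul, Nat.cast_ofNat, mul_sub,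
    sum_sub_distrib, mul_left_comm (σ _) 2, ← mul_sum, hbal, mul_zero, sub_zero, mul_assoc]

theorem hasGradientAt_barycentricCost_update [DecidableEq ι] [CompleteSpace E] {σ : ι → ℝ}
    (hσ : ∑ i, σ i ≠ 0) (x : ι → E) (j : ι) :
    HasGradientAt (fun y => barycentricCost σ (update x j y))
      ((2 * σ j) • (x j - univ.centerMass σ x)) (x j) := by
  have hcost := hasFDerivAt_barycentricCost hσ x
  rw [← update_eq_self j x] at hcost
  rw [hasGradientAt_iff_hasFDerivAt]
  refine (hcost.comp (x j) (hasFDerivAt_update x (x j))).congr_fderiv ?_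
  ext v
  simp [Pi.single_apply, apply_ite (DFunLike.coe · v), ← inner_sub_left,
    apply_ite (inner ℝ (x _ - univ.centerMass σ x))]

end BarycentricCost

/-- The weighted barycentric cost is `(1,l)`-twisted: for fixed `x₁,…,x_{l-1}`,
the map `x_l ↦ ∇_{x₁} c(x₁,…,x_l)` is injective. -/
theorem stmt3 {n l : ℕ} (hl : 2 ≤ l) (σ : Fin l → ℝ) (hσ : ∀ i, 0 < σ i)
    (c : (Fin l → EuclideanSpace ℝ (Fin n)) → ℝ)
    (hc : ∀ x, c x = ∑ i, σ i * ‖x i - (∑ k, σ k)⁻¹ • ∑ k, σ k • x k‖ ^ 2)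
    (p : Fin l → EuclideanSpace ℝ (Fin n)) :
    Function.Injective (fun xl : EuclideanSpace ℝ (Fin n) =>
      gradient
        (fun x1 =>
          c (Function.update (Function.update p ⟨l - 1, by omega⟩ xl)
              ⟨0, by omega⟩ x1))
        (p ⟨0, by omega⟩)) := by
  set first : Fin l := ⟨0, by omega⟩
  set last : Fin l := ⟨l - 1, by omega⟩
  have hne : first ≠ last := by simp [first, last, Fin.ext_iff]; omega
  have hS : ∑ k, σ k ≠ 0 := (sum_pos (fun i _ => hσ i) ⟨first, mem_univ _⟩).ne'
  have hcost : c = barycentricCost σ := funext hc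
  have hgrad : ∀ xl, gradient (fun x1 => c (update (update p last xl) first x1)) (p first) =
      (2 * σ first) • (p first - univ.centerMass σ (update p last xl)) := by
    intro xl
    have h := (hasGradientAt_barycentricCost_update hS (update p last xl) first).gradient
    rwa [update_of_ne hne, ← hcost] at h
  intro a b hab
  simp only [hgrad] at hab
  exact centerMass_update_injective hS (hσ last).ne' p
    (sub_right_injective (smul_right_injective _ (mul_pos two_pos (hσ first)).ne' hab))
end

section
/- For c(x₁,…,x_l) = Σᵢ σᵢ |xᵢ - x̄|² with l ≥ 3 and all σᵢ > 0, the matrix T := S + H with S = −Σ_{j=2}^{l−1} Σ_{i=2, i≠j}^{l−1} D²_{x_i x_j}c + Σ_{i,j=2}^{l−1} D²_{x_i x_l}c (D²_{x₁ x_l}c)^{−1} D²_{x₁ x_j}c and H = 0 equals Σ_{i=2}^{l−1} (−2σᵢ²/Σ_k σ_k) times the identity on the corresponding block, and in particular T is negative definite. -/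
/-!
All mixed second derivatives of the cost are scalar: `a i j = -2 σᵢ σⱼ / ∑ σ` off the diagonal.
This is a rank-one pattern, so the correction `a i l · a 1 j / a 1 l` equals `-2 σᵢ σⱼ / ∑ σ`
for every pair of middle indices, including `i = j`. It therefore cancels the off-diagonal
entries `-a i j` of `S` exactly and leaves `-2 σᵢ² / ∑ σ < 0` on the diagonal.
-/

open Finset

lemma rankOne_correction_eq {s x y f m : ℝ} (hs : s ≠ 0) (hf : f ≠ 0) (hm : m ≠ 0) :
    -2 * x * m / s * (-2 * f * y / s) / (-2 * f * m / s) = -2 * x * y / s := by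
  field_simp

lemma quadraticForm_eq_sum_diag_of_support {ι : Type*} [Fintype ι] [DecidableEq ι]
    (p : ι → Prop) (T : ι → ι → ℝ) (hT : ∀ i j, p i → p j → i ≠ j → T i j = 0)
    (v : ι → ℝ) (hv : ∀ i, ¬p i → v i = 0) :
    ∑ i, ∑ j, T i j * v i * v j = ∑ i, T i i * v i ^ 2 := by
  have hterm : ∀ i j, T i j * v i * v j = if i = j then T i i * v i ^ 2 else 0 := by
    intro i j
    by_cases hij : i = j
    · subst hij; rw [if_pos rfl]; ring
    rw [if_neg hij]
    by_cases hi : p i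
    · by_cases hj : p j
      · simp [hT i j hi hj hij]
      · simp [hv j hj]
    · simp [hv i hi]
  simp only [hterm, sum_ite_eq, mem_univ, if_true]

lemma quadraticForm_neg_of_diag_neg {ι : Type*} [Fintype ι] [DecidableEq ι]
    (p : ι → Prop) (T : ι → ι → ℝ) (hT : ∀ i j, p i → p j → i ≠ j → T i j = 0)
    (hdiag : ∀ i, p i → T i i < 0) (v : ι → ℝ) (hv : ∀ i, ¬p i → v i = 0) (hv0 : v ≠ 0) :
    ∑ i, ∑ j, T i j * v i * v j < 0 := by
  rw [quadraticForm_eq_sum_diag_of_support p T hT v hv, ← neg_pos, ← sum_neg_distrib]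
  obtain ⟨i₀, hi₀⟩ := Function.ne_iff.mp hv0
  have hp₀ : p i₀ := by_contra fun h => hi₀ (hv i₀ h)
  refine sum_pos' (fun i _ => ?_) ⟨i₀, mem_univ _, ?_⟩
  · by_cases hi : p i
    · exact neg_nonneg.mpr (mul_nonpos_of_nonpos_of_nonneg (hdiag i hi).le (sq_nonneg _))
    · simp [hv i hi]
  · exact neg_pos.mpr (mul_neg_of_neg_of_pos (hdiag i₀ hp₀) (pow_two_pos_of_ne_zero hi₀))

/-- Indices are 0-based: the paper's `x₁` and `x_l` are the indices `0` and `l - 1`, and its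
middle blocks `2, …, l - 1` are the indices `1 ≤ i ≤ l - 2`. -/
theorem stmt5 {l : ℕ} (hl : 3 ≤ l) (σ : Fin l → ℝ) (hσ : ∀ i, 0 < σ i)
    (a : Fin l → Fin l → ℝ)
    (ha : ∀ i j, a i j =
      if i = j then 2 * (σ i - σ i ^ 2 / ∑ k, σ k)
      else -2 * σ i * σ j / ∑ k, σ k)
    (T : Fin l → Fin l → ℝ)
    (hT : ∀ i j, T i j = (if i = j then 0 else -(a i j)) +
      a i ⟨l - 1, by omega⟩ * a ⟨0, by omega⟩ j / a ⟨0, by omega⟩ ⟨l - 1, by omega⟩) :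
    (∀ i j : Fin l, 1 ≤ i.val → i.val ≤ l - 2 → 1 ≤ j.val → j.val ≤ l - 2 →
        T i j = if i = j then -2 * σ i ^ 2 / ∑ k, σ k else 0) ∧
      ∀ v : Fin l → ℝ, (∀ i : Fin l, ¬(1 ≤ i.val ∧ i.val ≤ l - 2) → v i = 0) →
        v ≠ 0 → ∑ i, ∑ j, T i j * v i * v j < 0 := by
  set first : Fin l := ⟨0, by omega⟩
  set last : Fin l := ⟨l - 1, by omega⟩
  have hs : 0 < ∑ k, σ k := sum_pos (fun i _ => hσ i) ⟨first, mem_univ _⟩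
  have hblock : ∀ i j : Fin l, 1 ≤ i.val → i.val ≤ l - 2 → 1 ≤ j.val → j.val ≤ l - 2 →
      T i j = if i = j then -2 * σ i ^ 2 / ∑ k, σ k else 0 := by
    intro i j _ hi _ hj
    have hil : i ≠ last := Fin.ne_of_val_ne (by simp [last]; omega)
    have hfj : first ≠ j := Fin.ne_of_val_ne (by simp [first]; omega)
    have hfl : first ≠ last := Fin.ne_of_val_ne (by simp [first, last]; omega)
    rw [hT, ha i last, ha first j, ha first last, if_neg hil, if_neg hfj, if_neg hfl,
      rankOne_correction_eq hs.ne' (hσ first).ne' (hσ last).ne', ha i j]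
    split_ifs with hij
    · subst hij; ring
    · ring
  refine ⟨hblock, fun v hv hv0 => quadraticForm_neg_of_diag_neg _ T ?_ ?_ v hv hv0⟩
  · intro i j hi hj hij
    rw [hblock i j hi.1 hi.2 hj.1 hj.2, if_neg hij]
  · intro i hi
    rw [hblock i i hi.1 hi.2 hi.1 hi.2, if_pos rfl]
    exact div_neg_of_neg_of_pos (by nlinarith [hσ i]) hs
end

section
/- Let ν₀ minimize Φ(ν) = Σᵢ₌₁^l W₂(μᵢ,ν) with W₂(μᵢ,ν₀) > 0 for all i, and set σᵢ = 1/W₂(ν₀,μᵢ). Then ν₀ also minimizes Ψ(μ) = Σᵢ σᵢ W₂(μᵢ,μ)² over all μ. -/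
/-!
For `a > 0` one has `a⁻¹ b² ≥ 2b − a` (expand `a⁻¹ (b − a)² ≥ 0`), with equality at `b = a`.
Summing over `i` with `aᵢ = d(μᵢ, ν₀)`, `bᵢ = d(μᵢ, ν)` bounds the weighted quadratic cost at `ν`
below by `2 ∑ d(μᵢ, ν) − ∑ d(μᵢ, ν₀) ≥ ∑ d(μᵢ, ν₀)`, which is the weighted cost at `ν₀`.
-/

open Finset

lemma two_mul_sub_le_inv_mul_sq {a : ℝ} (ha : 0 < a) (b : ℝ) : 2 * b - a ≤ a⁻¹ * b ^ 2 := by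
  have hsq : 0 ≤ a⁻¹ * (b - a) ^ 2 := by positivity
  have hexpand : a⁻¹ * (b - a) ^ 2 = a⁻¹ * b ^ 2 - (2 * b - a) := by
    field_simp
    ring
  linarith

lemma Finset.sum_inv_mul_sq_le_of_sum_le {ι : Type*} (s : Finset ι) {a b : ι → ℝ}
    (ha : ∀ i ∈ s, 0 < a i) (hab : ∑ i ∈ s, a i ≤ ∑ i ∈ s, b i) :
    ∑ i ∈ s, (a i)⁻¹ * a i ^ 2 ≤ ∑ i ∈ s, (a i)⁻¹ * b i ^ 2 :=
  calc ∑ i ∈ s, (a i)⁻¹ * a i ^ 2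
      = ∑ i ∈ s, a i := sum_congr rfl fun i hi => by field_simp [(ha i hi).ne']
    _ ≤ ∑ i ∈ s, (2 * b i - a i) := by
        rw [sum_sub_distrib, ← mul_sum]
        linarith
    _ ≤ ∑ i ∈ s, (a i)⁻¹ * b i ^ 2 :=
        sum_le_sum fun i hi => two_mul_sub_le_inv_mul_sq (ha i hi) (b i)

/-- If `ν₀` minimizes `ν ↦ ∑ᵢ d(μᵢ, ν)` with `d(μᵢ, ν₀) > 0` for all `i`, then
with weights `σᵢ = 1 / d(μᵢ, ν₀)`, `ν₀` also minimizes
`ν ↦ ∑ᵢ σᵢ d(μᵢ, ν)²`. (In the paper, `d = W₂` on Wasserstein space.) -/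
theorem stmt10 {Y : Type*} [MetricSpace Y] {l : ℕ} (μ : Fin l → Y) (ν₀ : Y)
    (hpos : ∀ i, 0 < dist (μ i) ν₀)
    (hmin : ∀ ν, ∑ i, dist (μ i) ν₀ ≤ ∑ i, dist (μ i) ν) :
    ∀ ν, ∑ i, (dist (μ i) ν₀)⁻¹ * dist (μ i) ν₀ ^ 2 ≤
      ∑ i, (dist (μ i) ν₀)⁻¹ * dist (μ i) ν ^ 2 := fun ν =>
  univ.sum_inv_mul_sq_le_of_sum_le (fun i _ => hpos i) (hmin ν)
end
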